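/- arXiv:math/0207071 — 2 statements merged into one kernel-verified Lean document; each statement's English description precedes it below -/
import Mathlib

section
/- Let n ≥ 1 and let α > 0 be a real number. Define μ : ℂ^{n+1} ∖ {0} → ℝ^{n+1} by μ(z)_i = α|z_i|² / (Σ_{j=0}^n |z_j|²). Let z = (0, z_1, …, z_n) with z_i ≠ 0 for i = 1, …, n, and let r_i = α|z_i|/(1+|z_i|²) for i = 1, …, n. Then the product r_1 ⋯ r_n is maximal (over all such z) if and only if |z_1| = ⋯ = |z_n| = 1, and in that case μ(z) = (α/n)(0, 1, …, 1) = q_0, the center point of the facet V_0. -/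
/-! Since `α / 2 - α t / (1 + t²) = α (t - 1)² / (2 (1 + t²))`, each radius is at most `α / 2`,
with equality exactly at `|z_i| = 1`. A product of positive factors, each below its bound, reaches
the product of the bounds only if every factor does. When all `|z_i| = 1` we get `∑ |z_j|² = n`. -/

namespace Finset

variable {ι R : Type*} [CommMonoidWithZero R] [PartialOrder R] [ZeroLEOneClass R]
  [PosMulStrictMono R] [Nontrivial R]

theorem prod_le_prod_iff_forall_eq_of_le {s : Finset ι} {f g : ι → R}
    (hf : ∀ i ∈ s, 0 < f i) (hfg : ∀ i ∈ s, f i ≤ g i) :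
    ∏ i ∈ s, g i ≤ ∏ i ∈ s, f i ↔ ∀ i ∈ s, f i = g i := by
  refine ⟨fun hle => ?_, fun heq => (prod_congr rfl heq).ge⟩
  by_contra! hne
  obtain ⟨i, hi, hfgi⟩ := hne
  exact (prod_lt_prod hf hfg ⟨i, hi, (hfg i hi).lt_of_ne hfgi⟩).not_ge hle

end Finset

theorem mul_div_one_add_sq_le_half {α : ℝ} (hα : 0 ≤ α) (t : ℝ) :
    α * t / (1 + t ^ 2) ≤ α / 2 := by
  rw [div_le_div_iff₀ (by positivity) two_pos]
  nlinarith [mul_nonneg hα (sq_nonneg (t - 1))]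

theorem mul_div_one_add_sq_eq_half_iff {α : ℝ} (hα : α ≠ 0) {t : ℝ} :
    α * t / (1 + t ^ 2) = α / 2 ↔ t = 1 := by
  rw [div_eq_div_iff (by positivity) two_ne_zero]
  constructor
  · intro h
    have : α * (t - 1) ^ 2 = 0 := by linear_combination -h
    simpa [hα, sub_eq_zero] using this
  · rintro rfl
    ring

theorem sum_norm_sq_eq_of_norm_eq_one {n : ℕ} {z : Fin (n + 1) → ℂ} (hz0 : z 0 = 0)
    (h : ∀ i, i ≠ 0 → ‖z i‖ = 1) : ∑ j, ‖z j‖ ^ 2 = n := by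
  simp [Fin.sum_univ_succ, hz0, h _ (Fin.succ_ne_zero _)]

theorem stmt1_general (n : ℕ) (α : ℝ) (hα : 0 < α)
    (μ : (Fin (n + 1) → ℂ) → (Fin (n + 1) → ℝ))
    (hμ : ∀ z, μ z = fun i => α * ‖z i‖ ^ 2 / ∑ j, ‖z j‖ ^ 2)
    (z : Fin (n + 1) → ℂ) (hz0 : z 0 = 0) (hz : ∀ i, i ≠ 0 → z i ≠ 0) :
    ((∀ w : Fin (n + 1) → ℂ, w 0 = 0 → (∀ i, i ≠ 0 → w i ≠ 0) →
        ∏ i ∈ Finset.univ.erase 0,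
            α * ‖w i‖ / (1 + ‖w i‖ ^ 2) ≤
          ∏ i ∈ Finset.univ.erase 0,
            α * ‖z i‖ / (1 + ‖z i‖ ^ 2))
      ↔ ∀ i, i ≠ 0 → ‖z i‖ = 1) ∧
    ((∀ i, i ≠ 0 → ‖z i‖ = 1) →
      μ z = fun i => if i = 0 then 0 else α / n) := by
  have hle : ∀ t : ℝ, α * t / (1 + t ^ 2) ≤ α / 2 := mul_div_one_add_sq_le_half hα.le
  refine ⟨⟨fun hmax i hi => ?_, fun h w _ _ => ?_⟩, fun h => ?_⟩
  · have hpos : ∀ j ∈ Finset.univ.erase 0, 0 < α * ‖z j‖ / (1 + ‖z j‖ ^ 2) := fun j hj => by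
      have := norm_pos_iff.mpr (hz j (Finset.ne_of_mem_erase hj))
      positivity
    have hmax₁ := hmax (fun j => if j = 0 then 0 else 1) (by simp) (fun j hj => by simp [hj])
    have hall := (Finset.prod_le_prod_iff_forall_eq_of_le hpos fun j _ => hle _).mp <| by
      refine le_of_eq_of_le (Finset.prod_congr rfl fun j hj => ?_) hmax₁
      norm_num [Finset.ne_of_mem_erase hj]
    exact (mul_div_one_add_sq_eq_half_iff hα.ne').mp (hall i (by simp [hi]))
  · calc ∏ i ∈ Finset.univ.erase 0, α * ‖w i‖ / (1 + ‖w i‖ ^ 2)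
        ≤ ∏ _i ∈ Finset.univ.erase (0 : Fin (n + 1)), α / 2 :=
          Finset.prod_le_prod (fun i _ => by positivity) fun i _ => hle _
      _ = ∏ i ∈ Finset.univ.erase 0, α * ‖z i‖ / (1 + ‖z i‖ ^ 2) :=
          Finset.prod_congr rfl fun i hi => by
            rw [h i (Finset.ne_of_mem_erase hi)]
            ring
  · rw [hμ, sum_norm_sq_eq_of_norm_eq_one hz0 h]
    funext i
    by_cases hi : i = 0 <;> simp [hi, hz0, h]

/-- the paper's Lemma: for `z = (0, z_1, …, z_n)` with all `z_i ≠ 0`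
(`i ≥ 1`), the product of the radii `r_i = α|z_i|/(1+|z_i|²)` is maximal over all such
`z` iff `|z_i| = 1` for all `i ≥ 1`, and in that case the moment map sends `z` to
`q_0 = (α/n)(0,1,…,1)`, the center of the facet `V_0`. -/
theorem stmt1 (n : ℕ) (hn : 1 ≤ n) (α : ℝ) (hα : 0 < α)
    (μ : (Fin (n + 1) → ℂ) → (Fin (n + 1) → ℝ))
    (hμ : ∀ z, μ z = fun i => α * ‖z i‖ ^ 2 / ∑ j, ‖z j‖ ^ 2)
    (z : Fin (n + 1) → ℂ) (hz0 : z 0 = 0) (hz : ∀ i, i ≠ 0 → z i ≠ 0) :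
    ((∀ w : Fin (n + 1) → ℂ, w 0 = 0 → (∀ i, i ≠ 0 → w i ≠ 0) →
        ∏ i ∈ Finset.univ.erase 0,
            α * ‖w i‖ / (1 + ‖w i‖ ^ 2) ≤
          ∏ i ∈ Finset.univ.erase 0,
            α * ‖z i‖ / (1 + ‖z i‖ ^ 2))
      ↔ ∀ i, i ≠ 0 → ‖z i‖ = 1) ∧
    ((∀ i, i ≠ 0 → ‖z i‖ = 1) →
      μ z = fun i => if i = 0 then 0 else α / n) :=
  stmt1_general n α hα μ hμ z hz0 hz
end

section
/- Let n ≥ 1 and let α > 0 be a real number. In ℝ^{n+1} with the standard inner product, let Δ = convexHull{α e_0, …, α e_n}, let s = (α/(n+1))(1, …, 1) be its center, and let H = { x ∈ ℝ^{n+1} : Σ_{i=0}^n x_i = 0 }. Then the polar-dual set { x ∈ H : ⟨x, y − s⟩ ≤ 1 for all y ∈ Δ } equals { x ∈ H : x_i ≤ 1/α for all i }, and this set is the convex hull of the n+1 points u_i = (1/α)((1, …, 1) − (n+1) e_i), i = 0, …, n. -/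
/-!
On the hyperplane `∑ xᵢ = 0` the center `s` drops out of `⟨x, y - s⟩`, and a linear functional
is bounded by `1` on a convex hull iff it is on the vertices `α eᵢ`; this gives `xᵢ ≤ 1/α`.
The affine map `w ↦ (1/α)(1 - (n+1) w)` sends `eᵢ` to `uᵢ` and carries the standard simplex
`{w ≥ 0, ∑ wᵢ = 1}` onto `{∑ xᵢ = 0, xᵢ ≤ 1/α}`, so this set is the convex hull of the `uᵢ`.
-/

open Finset Matrix

section DualSimplex

variable {ι : Type*} [Fintype ι]

theorem sum_mul_sub_const_eq_dotProduct {x : ι → ℝ} (hx : ∑ i, x i = 0) (y : ι → ℝ) (c : ℝ) :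
    ∑ i, x i * (y i - c) = x ⬝ᵥ y := by
  simp only [mul_sub, sum_sub_distrib, ← sum_mul, hx, zero_mul, sub_zero, dotProduct]

theorem isLinearMap_dotProduct (x : ι → ℝ) : IsLinearMap ℝ (x ⬝ᵥ ·) :=
  ⟨dotProduct_add x, fun c y => dotProduct_smul c x y⟩

theorem forall_mem_convexHull_le_iff {E : Type*} [AddCommGroup E] [Module ℝ E] {f : E → ℝ}
    (hf : IsLinearMap ℝ f) (s : Set E) (c : ℝ) :
    (∀ y ∈ convexHull ℝ s, f y ≤ c) ↔ ∀ y ∈ s, f y ≤ c :=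
  ⟨fun h y hy => h y (subset_convexHull ℝ s hy),
    fun h => convexHull_min h (convex_halfSpace_le hf c)⟩

theorem polar_convexHull_smul_single_iff [DecidableEq ι] {α : ℝ} (hα : 0 < α) {x : ι → ℝ}
    (hx : ∑ i, x i = 0) (c : ℝ) :
    (∀ y ∈ convexHull ℝ (Set.range fun i => α • (Pi.single i 1 : ι → ℝ)),
      ∑ i, x i * (y i - c) ≤ 1) ↔ ∀ i, x i ≤ 1 / α := by
  simp only [sum_mul_sub_const_eq_dotProduct hx,
    forall_mem_convexHull_le_iff (isLinearMap_dotProduct x), Set.forall_mem_range,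
    dotProduct_smul, dotProduct_single, smul_eq_mul, mul_one, le_div_iff₀ hα, mul_comm α]

variable (ι) in
noncomputable def dualSimplexMap (α : ℝ) : (ι → ℝ) →ᵃ[ℝ] (ι → ℝ) where
  toFun w := (1 / α) • (1 - (Fintype.card ι : ℝ) • w)
  linear := -((Fintype.card ι : ℝ) / α) • LinearMap.id
  map_vadd' p v := by
    ext i
    simp only [vadd_eq_add, Pi.smul_apply, Pi.sub_apply, Pi.add_apply, Pi.one_apply,
      LinearMap.smul_apply, LinearMap.id_apply, smul_eq_mul]
    ring

theorem dualSimplexMap_apply (α : ℝ) (w : ι → ℝ) (i : ι) :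
    dualSimplexMap ι α w i = (1 - Fintype.card ι * w i) / α := by
  simp only [dualSimplexMap, AffineMap.coe_mk, Pi.smul_apply, Pi.sub_apply, Pi.one_apply,
    smul_eq_mul]
  ring

theorem convexHull_range_eq_dualSimplexMap_image [DecidableEq ι] (α : ℝ) :
    convexHull ℝ (Set.range fun i => (1 / α) • ((fun _ => 1 : ι → ℝ) -
      (Fintype.card ι : ℝ) • (Pi.single i 1 : ι → ℝ))) =
    dualSimplexMap ι α '' stdSimplex ℝ ι := by
  rw [← convexHull_rangle_single_eq_stdSimplex, AffineMap.image_convexHull, ← Set.range_comp]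
  rfl

theorem dualSimplexMap_image_stdSimplex [Nonempty ι] {α : ℝ} (hα : 0 < α) :
    dualSimplexMap ι α '' stdSimplex ℝ ι = {x | ∑ i, x i = 0 ∧ ∀ i, x i ≤ 1 / α} := by
  have hcard : (0 : ℝ) < Fintype.card ι := by exact_mod_cast Fintype.card_pos
  ext x
  constructor
  · rintro ⟨w, ⟨hw_nonneg, hw_sum⟩, rfl⟩
    refine ⟨?_, fun i => ?_⟩
    · simp only [dualSimplexMap_apply, ← sum_div, sum_sub_distrib, ← mul_sum, hw_sum]
      simp
    · rw [dualSimplexMap_apply]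
      gcongr
      nlinarith [hw_nonneg i]
  · rintro ⟨hx_sum, hx_le⟩
    refine ⟨fun i => (1 - α * x i) / Fintype.card ι, ⟨fun i => ?_, ?_⟩, ?_⟩
    · have := (le_div_iff₀ hα).1 (hx_le i)
      apply div_nonneg <;> linarith
    · rw [← sum_div, sum_sub_distrib, ← mul_sum, hx_sum]
      simp [hcard.ne']
    · ext i
      rw [dualSimplexMap_apply]
      field_simp
      ring

end DualSimplex

theorem stmt11_general (n : ℕ) (α : ℝ) (hα : 0 < α) :
    ({x : Fin (n + 1) → ℝ | (∑ i, x i = 0) ∧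
        ∀ y ∈ convexHull ℝ
          (Set.range fun i : Fin (n + 1) => α • (Pi.single i 1 : Fin (n + 1) → ℝ)),
          ∑ i, x i * (y i - α / ((n : ℝ) + 1)) ≤ 1} =
      {x : Fin (n + 1) → ℝ | (∑ i, x i = 0) ∧ ∀ i, x i ≤ 1 / α}) ∧
    ({x : Fin (n + 1) → ℝ | (∑ i, x i = 0) ∧ ∀ i, x i ≤ 1 / α} =
      convexHull ℝ (Set.range fun i : Fin (n + 1) =>
        (1 / α) • ((fun _ => 1 : Fin (n + 1) → ℝ) -
          ((n : ℝ) + 1) • (Pi.single i 1 : Fin (n + 1) → ℝ)))) := by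
  have hcard : (Fintype.card (Fin (n + 1)) : ℝ) = n + 1 := by simp
  refine ⟨Set.ext fun x => and_congr_right (polar_convexHull_smul_single_iff hα · _), ?_⟩
  rw [← hcard, convexHull_range_eq_dualSimplexMap_image, dualSimplexMap_image_stdSimplex hα]

/-- in `ℝ^{n+1}` with the standard inner product, the polar dual
(in the hyperplane `H = {∑ x_i = 0}`, with center `s = (α/(n+1))(1,…,1)`) of the
moment polytope `Δ = convexHull{α e_0, …, α e_n}` is `{x ∈ H : x_i ≤ 1/α ∀i}`, which
is the convex hull of the points `u_i = (1/α)((1,…,1) − (n+1) e_i)`. -/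
theorem stmt11 (n : ℕ) (hn : 1 ≤ n) (α : ℝ) (hα : 0 < α) :
    ({x : Fin (n + 1) → ℝ | (∑ i, x i = 0) ∧
        ∀ y ∈ convexHull ℝ
          (Set.range fun i : Fin (n + 1) => α • (Pi.single i 1 : Fin (n + 1) → ℝ)),
          ∑ i, x i * (y i - α / ((n : ℝ) + 1)) ≤ 1} =
      {x : Fin (n + 1) → ℝ | (∑ i, x i = 0) ∧ ∀ i, x i ≤ 1 / α}) ∧
    ({x : Fin (n + 1) → ℝ | (∑ i, x i = 0) ∧ ∀ i, x i ≤ 1 / α} =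
      convexHull ℝ (Set.range fun i : Fin (n + 1) =>
        (1 / α) • ((fun _ => 1 : Fin (n + 1) → ℝ) -
          ((n : ℝ) + 1) • (Pi.single i 1 : Fin (n + 1) → ℝ)))) :=
  stmt11_general n α hα
end
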